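/- arXiv:2505.01045 — 5 statements merged into one kernel-verified Lean document; each statement's English description precedes it below -/
import Mathlib

section
/- Let H be a complex Hilbert space and T : H →L[ℂ] H a bounded self-adjoint operator with 0 ≤ T, and for λ > 0 let R_λ = (λ•1 + T)⁻¹. Then for every g ∈ H, every λ > 0, and f = √T g, one has √λ · ‖R_λ f‖ ≤ (1/2) ‖g‖. -/
open scoped InnerProductSpace

variable {H : Type*} [NormedAddCommGroup H] [InnerProductSpace ℂ H] [CompleteSpace H]

/-- The resolventOp `R_λ = (λ • 1 + T)⁻¹` of `-T`, as `Ring.inverse`. -/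
noncomputable def resolventOp (T : H →L[ℂ] H) (l : ℝ) : H →L[ℂ] H :=
  Ring.inverse (l • (1 : H →L[ℂ] H) + T)

/-! `R_λ √T` is the function `t ↦ √t / (λ + t)` of `T`, and `λ + t ≥ 2 √(λ t)` bounds it
by `1 / (2 √λ)` on `[0, ∞) ⊇ spectrum T`. -/

theorem Real.sqrt_div_add_le {l x : ℝ} (hl : 0 < l) (hx : 0 ≤ x) :
    √x / (l + x) ≤ (2 * √l)⁻¹ := by
  rw [← one_div, div_le_div_iff₀ (by positivity) (by positivity)]
  nlinarith [Real.sq_sqrt hl.le, Real.sq_sqrt hx, sq_nonneg (√l - √x)]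

section CStarAlgebra

variable {A : Type*} [CStarAlgebra A] [PartialOrder A] [StarOrderedRing A]

theorem add_pos_of_mem_spectrum {a : A} (ha : 0 ≤ a) {l : ℝ} (hl : 0 < l) {t : ℝ}
    (ht : t ∈ spectrum ℝ a) : 0 < l + t :=
  add_pos_of_pos_of_nonneg hl (spectrum_nonneg_of_nonneg ha ht)

theorem Ring.inverse_smul_one_add_eq_cfc {a : A} (ha : 0 ≤ a) {l : ℝ} (hl : 0 < l) :
    Ring.inverse (l • (1 : A) + a) = cfc (fun t : ℝ => (l + t)⁻¹) a := by
  have hcfc : l • (1 : A) + a = cfc (fun t : ℝ => l + t) a := by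
    rw [cfc_const_add l (fun t : ℝ => t) a, cfc_id' ℝ a, Algebra.algebraMap_eq_smul_one]
  rw [hcfc, ← cfc_inv (fun t : ℝ => l + t) a fun t ht => (add_pos_of_mem_spectrum ha hl ht).ne']

theorem norm_inverse_smul_one_add_mul_sqrt_le {a : A} (ha : 0 ≤ a) {l : ℝ} (hl : 0 < l) :
    ‖Ring.inverse (l • (1 : A) + a) * CFC.sqrt a‖ ≤ (2 * √l)⁻¹ := by
  have hcomp : Ring.inverse (l • (1 : A) + a) * CFC.sqrt a =
      cfc (fun t : ℝ => √t / (l + t)) a := by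
    have hinv : ContinuousOn (fun t : ℝ => (l + t)⁻¹) (spectrum ℝ a) :=
      (continuousOn_const.add continuousOn_id).inv₀ fun t ht =>
        (add_pos_of_mem_spectrum ha hl ht).ne'
    rw [Ring.inverse_smul_one_add_eq_cfc ha hl, CFC.sqrt_eq_real_sqrt a ha, cfcₙ_eq_cfc,
      ← cfc_mul (fun t : ℝ => (l + t)⁻¹) Real.sqrt a hinv]
    exact cfc_congr fun t _ => inv_mul_eq_div _ _
  rw [hcomp]
  refine norm_cfc_le (by positivity) fun t ht => ?_
  have ht0 : 0 ≤ t := spectrum_nonneg_of_nonneg ha ht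
  rw [Real.norm_of_nonneg (by positivity)]
  exact Real.sqrt_div_add_le hl ht0

end CStarAlgebra

theorem sqrt_lambda_norm_resolvent_le_general (T : H →L[ℂ] H)
    (hpos : 0 ≤ T) (g : H) {l : ℝ} (hl : 0 < l) :
    Real.sqrt l * ‖resolventOp T l (CFC.sqrt T g)‖ ≤ (1 / 2) * ‖g‖ := by
  have hsqrt_l : 0 < √l := Real.sqrt_pos.mpr hl
  calc √l * ‖resolventOp T l (CFC.sqrt T g)‖
      = √l * ‖(resolventOp T l * CFC.sqrt T) g‖ := rfl
    _ ≤ √l * ((2 * √l)⁻¹ * ‖g‖) := by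
        gcongr
        exact (resolventOp T l * CFC.sqrt T).le_of_opNorm_le
          (norm_inverse_smul_one_add_mul_sqrt_le hpos hl) g
    _ = 1 / 2 * ‖g‖ := by field_simp

/-- The key estimate `√λ ‖R_λ (√T g)‖ ≤ (1/2) ‖g‖`. -/
theorem sqrt_lambda_norm_resolvent_le (T : H →L[ℂ] H) (hT : IsSelfAdjoint T)
    (hpos : 0 ≤ T) (g : H) {l : ℝ} (hl : 0 < l) :
    Real.sqrt l * ‖resolventOp T l (CFC.sqrt T g)‖ ≤ (1 / 2) * ‖g‖ :=
  sqrt_lambda_norm_resolvent_le_general T hpos g hl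
end

section
/- Let H be a complex Hilbert space and T : H →L[ℂ] H a bounded self-adjoint operator with 0 ≤ T, and for λ > 0 let R_λ = (λ•1 + T)⁻¹. Then for every f ∈ H, λ • R_λ f converges, as λ → 0⁺, to the orthogonal projection of f onto the kernel of T. -/
open scoped InnerProductSpace

variable {H : Type*} [NormedAddCommGroup H] [InnerProductSpace ℂ H] [CompleteSpace H]

/-! On `ker T` the operator `λ R_λ` is the identity, while on the range of `T`
`λ R_λ (T g) = λ g - λ (λ R_λ g)`, which is `O(λ)`. Since `‖λ R_λ‖ ≤ 1` for positive `T`,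
convergence to `0` passes from the range of `T` to its closure, which for self-adjoint `T`
is `(ker T)ᗮ`. -/

open Filter Topology ContinuousLinearMap

theorem isClosed_setOfPred_tendsto_zero_of_eventually_norm_le {ι 𝕜 E F : Type*}
    [NontriviallyNormedField 𝕜] [SeminormedAddCommGroup E] [NormedSpace 𝕜 E]
    [SeminormedAddCommGroup F] [NormedSpace 𝕜 F] {l : Filter ι} {A : ι → E →L[𝕜] F} {C : ℝ}
    (hA : ∀ᶠ i in l, ‖A i‖ ≤ C) : IsClosed {x | Tendsto (fun i ↦ A i x) l (𝓝 0)} := by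
  refine isClosed_of_closure_subset fun x hx ↦ ?_
  rw [Set.mem_ofPred_eq, Metric.tendsto_nhds]
  intro ε hε
  have hC : 0 < |C| + 1 := by positivity
  obtain ⟨y, hy, hxy⟩ := Metric.mem_closure_iff.mp hx (ε / 2 / (|C| + 1)) (by positivity)
  filter_upwards [hA, Metric.tendsto_nhds.mp hy (ε / 2) (half_pos hε)] with i hAi hyi
  rw [dist_zero_right] at hyi ⊢
  rw [dist_eq_norm, lt_div_iff₀ hC] at hxy
  calc ‖A i x‖ ≤ ‖A i (x - y)‖ + ‖A i y‖ := by
        simpa only [map_sub, sub_add_cancel] using norm_add_le (A i (x - y)) (A i y)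
    _ ≤ (|C| + 1) * ‖x - y‖ + ‖A i y‖ := by
        gcongr
        exact (A i).le_of_opNorm_le (hAi.trans ((le_abs_self C).trans (lt_add_one _).le)) _
    _ < ε / 2 + ε / 2 := by rw [mul_comm]; gcongr
    _ = ε := add_halves ε

theorem isUnit_smul_one_add_of_nonneg {A : Type*} [Ring A] [PartialOrder A] [Algebra ℝ A]
    [NonnegSpectrumClass ℝ A] {a : A} (ha : 0 ≤ a) {r : ℝ} (hr : 0 < r) :
    IsUnit (r • 1 + a) := by
  have hspec : -r ∉ spectrum ℝ a := fun h ↦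
    (spectrum_nonneg_of_nonneg ha h).not_gt (neg_neg_of_pos hr)
  rw [spectrum.notMem_iff] at hspec
  simpa [Algebra.algebraMap_eq_smul_one, neg_sub', sub_neg_eq_add, add_comm] using hspec.neg

theorem ContinuousLinearMap.IsPositive.mul_norm_le_norm_smul_one_add_apply {E : Type*}
    [NormedAddCommGroup E] [InnerProductSpace ℂ E] {T : E →L[ℂ] E}
    (hT : T.IsPositive) (r : ℝ) (x : E) :
    r * ‖x‖ ≤ ‖(r • (1 : E →L[ℂ] E) + T) x‖ := by
  have hcoer : r * ‖x‖ ^ 2 ≤ RCLike.re ⟪(r • (1 : E →L[ℂ] E) + T) x, x⟫_ℂ := by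
    rw [add_apply, inner_add_left, map_add, smul_apply, one_apply_eq_self, ← algebraMap_smul ℂ r x,
      inner_smul_left, inner_self_eq_norm_sq_to_K]
    have hTx := hT.re_inner_nonneg_left x
    simp only [Complex.coe_algebraMap, Complex.conj_ofReal, RCLike.re_to_complex] at hTx ⊢
    norm_cast
    linarith
  have hCS := (RCLike.re_le_norm _).trans
    (norm_inner_le_norm (𝕜 := ℂ) ((r • (1 : E →L[ℂ] E) + T) x) x)
  rcases (norm_nonneg x).eq_or_lt with hx | hx
  · simp [← hx]
  · nlinarith

section Resolvent

variable {T : H →L[ℂ] H} (hT : 0 ≤ T)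
include hT

section Pointwise

variable {l : ℝ} (hl : 0 < l)
include hl

theorem smul_one_add_apply_resolventOp_apply (x : H) :
    (l • (1 : H →L[ℂ] H) + T) (resolventOp T l x) = x :=
  DFunLike.congr_fun (Ring.mul_inverse_cancel _ (isUnit_smul_one_add_of_nonneg hT hl)) x

theorem resolventOp_apply_smul_one_add_apply (x : H) :
    resolventOp T l ((l • (1 : H →L[ℂ] H) + T) x) = x :=
  DFunLike.congr_fun (Ring.inverse_mul_cancel _ (isUnit_smul_one_add_of_nonneg hT hl)) x

theorem norm_smul_resolventOp_le : ‖l • resolventOp T l‖ ≤ 1 := by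
  refine opNorm_le_bound _ zero_le_one fun x ↦ ?_
  have := ((nonneg_iff_isPositive T).mp hT).mul_norm_le_norm_smul_one_add_apply l
    (resolventOp T l x)
  rw [smul_one_add_apply_resolventOp_apply hT hl] at this
  simpa [norm_smul, abs_of_pos hl] using this

theorem smul_resolventOp_apply_of_apply_eq_zero {x : H} (hx : T x = 0) :
    l • resolventOp T l x = x := by
  simpa [hx, map_smul_of_tower] using resolventOp_apply_smul_one_add_apply hT hl x

theorem smul_resolventOp_apply_apply (g : H) :
    l • resolventOp T l (T g) = l • g - l • (l • resolventOp T l g) := by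
  have hTg : T g = (l • (1 : H →L[ℂ] H) + T) g - l • g := by simp
  rw [hTg, map_sub, resolventOp_apply_smul_one_add_apply hT hl, map_smul_of_tower, smul_sub]

end Pointwise

theorem tendsto_smul_resolventOp_apply_apply (g : H) :
    Tendsto (fun l : ℝ ↦ l • resolventOp T l (T g)) (𝓝[>] 0) (𝓝 0) := by
  have hbound : ∀ᶠ l in 𝓝[>] (0 : ℝ), ‖l • resolventOp T l (T g)‖ ≤ 2 * l * ‖g‖ := by
    filter_upwards [self_mem_nhdsWithin] with l (hl : 0 < l)
    rw [smul_resolventOp_apply_apply hT hl]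
    calc ‖l • g - l • (l • resolventOp T l g)‖ ≤ ‖l • g‖ + l * ‖l • resolventOp T l g‖ := by
          simpa [norm_smul, abs_of_pos hl] using norm_sub_le (l • g) (l • (l • resolventOp T l g))
      _ ≤ l * ‖g‖ + l * ‖g‖ := by
          rw [norm_smul, Real.norm_of_nonneg hl.le]
          gcongr
          exact le_of_opNorm_le _ (norm_smul_resolventOp_le hT hl) g |>.trans_eq (one_mul _)
      _ = 2 * l * ‖g‖ := by ring
  have hlim : Tendsto (fun l : ℝ ↦ 2 * l * ‖g‖) (𝓝[>] 0) (𝓝 0) := by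
    have hcont : Continuous fun l : ℝ ↦ 2 * l * ‖g‖ := by fun_prop
    exact (hcont.tendsto' 0 0 (by simp)).mono_left nhdsWithin_le_nhds
  exact squeeze_zero_norm' hbound hlim

theorem tendsto_smul_resolventOp_apply_of_mem_orthogonal_ker {x : H}
    (hx : x ∈ (LinearMap.ker (T : H →ₗ[ℂ] H))ᗮ) :
    Tendsto (fun l : ℝ ↦ l • resolventOp T l x) (𝓝[>] 0) (𝓝 0) := by
  have hself : adjoint T = T := ((nonneg_iff_isPositive T).mp hT).isSelfAdjoint.adjoint_eq
  rw [orthogonal_ker, hself, ← SetLike.mem_coe, Submodule.topologicalClosure_coe] at hx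
  show x ∈ {y | Tendsto (fun l : ℝ ↦ (l • resolventOp T l) y) (𝓝[>] 0) (𝓝 0)}
  refine closure_minimal ?_ (isClosed_setOfPred_tendsto_zero_of_eventually_norm_le (C := 1) ?_) hx
  · rintro _ ⟨g, rfl⟩
    exact tendsto_smul_resolventOp_apply_apply hT g
  · exact eventually_mem_nhdsWithin.mono fun _ hl ↦ norm_smul_resolventOp_le hT hl

end Resolvent

theorem tendsto_smul_resolvent_orthogonalProjection_ker_general (T : H →L[ℂ] H)
    (hpos : 0 ≤ T) (f : H) :
    Filter.Tendsto (fun l : ℝ => l • resolventOp T l f) (nhdsWithin 0 (Set.Ioi 0))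
      (nhds (Submodule.orthogonalProjectionOnto (LinearMap.ker (T : H →ₗ[ℂ] H)) f : H)) := by
  set K := LinearMap.ker (T : H →ₗ[ℂ] H)
  set p : H := (K.orthogonalProjectionOnto f : H)
  have hker : Tendsto (fun l : ℝ ↦ l • resolventOp T l p) (𝓝[>] 0) (𝓝 p) :=
    tendsto_const_nhds.congr' <| eventually_mem_nhdsWithin.mono fun _ hl ↦
      (smul_resolventOp_apply_of_apply_eq_zero hpos hl (K.orthogonalProjectionOnto f).2).symm
  have horth := tendsto_smul_resolventOp_apply_of_mem_orthogonal_ker hpos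
    (K.sub_starProjection_mem_orthogonal f)
  simpa [← smul_add, ← map_add, p] using hker.add horth

/-- Abelian ergodic theorem: `λ • R_λ f` converges as `λ → 0⁺` to the orthogonal
projection of `f` onto the kernel of `T`. -/
theorem tendsto_smul_resolvent_orthogonalProjection_ker (T : H →L[ℂ] H)
    (hT : IsSelfAdjoint T) (hpos : 0 ≤ T) (f : H) :
    Filter.Tendsto (fun l : ℝ => l • resolventOp T l f) (nhdsWithin 0 (Set.Ioi 0))
      (nhds (Submodule.orthogonalProjectionOnto (LinearMap.ker (T : H →ₗ[ℂ] H)) f : H)) :=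
  tendsto_smul_resolvent_orthogonalProjection_ker_general T hpos f
end

section
/- Let H be a complex Hilbert space and T : H →L[ℂ] H a bounded self-adjoint operator with 0 ≤ T, and for λ > 0 let R_λ = (λ•1 + T)⁻¹. Then for every g ∈ H, R_λ (T g) converges, as λ → 0⁺, to the orthogonal projection of g onto the orthogonal complement of the kernel of T. -/
open scoped InnerProductSpace

variable {H : Type*} [NormedAddCommGroup H] [InnerProductSpace ℂ H] [CompleteSpace H]

/-! From `R_λ (λ • 1 + T) = 1` we get `R_λ (T x) = x - λ • R_λ x`, so everything reduces to
`λ • R_λ x → 0` for `x ∈ (ker T)ᗮ`. Positivity gives the uniform bound `‖λ • R_λ‖ ≤ 1`. On the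
range of `T` the convergence is explicit, `λ • R_λ (T u) = λ • (u - λ • R_λ u)`, and the uniform
bound carries it over to the closure of the range, which is `(ker T)ᗮ` since `T` is self-adjoint.
Finally `T g = T x` for `x` the projection of `g` onto `(ker T)ᗮ`. -/

open Filter Topology

namespace ContinuousLinearMap

theorem isClosed_setOf_tendsto_apply_zero {ι 𝕜 E F : Type*} [NontriviallyNormedField 𝕜]
    [SeminormedAddCommGroup E] [NormedSpace 𝕜 E] [SeminormedAddCommGroup F] [NormedSpace 𝕜 F]
    {l : Filter ι} {A : ι → E →L[𝕜] F} {C : ℝ} (hA : ∀ᶠ i in l, ‖A i‖ ≤ C) :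
    IsClosed {x | Tendsto (fun i => A i x) l (𝓝 0)} := by
  refine isClosed_of_closure_subset fun x hx => Metric.tendsto_nhds.mpr fun ε hε => ?_
  obtain ⟨y, hy, hxy⟩ := Metric.mem_closure_iff.mp hx (ε / (2 * (|C| + 1))) (by positivity)
  filter_upwards [hA, Metric.tendsto_nhds.mp hy (ε / 2) (half_pos hε)] with i hAi hAy
  rw [dist_zero_right] at hAy ⊢
  rw [dist_eq_norm, lt_div_iff₀ (by positivity)] at hxy
  calc ‖A i x‖ = ‖A i (x - y) + A i y‖ := by rw [← map_add, sub_add_cancel]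
    _ ≤ |C| * ‖x - y‖ + ‖A i y‖ :=
      norm_add_le_of_le ((A i).le_of_opNorm_le (hAi.trans (le_abs_self C)) _) le_rfl
    _ < ε := by nlinarith [norm_nonneg (x - y), abs_nonneg C]

section InnerProductSpace

variable {𝕜 E F : Type*} [RCLike 𝕜] [NormedAddCommGroup E] [InnerProductSpace 𝕜 E]
  [CompleteSpace E]

theorem apply_orthogonalProjectionOnto_orthogonal_ker [NormedAddCommGroup F] [NormedSpace 𝕜 F]
    (T : E →L[𝕜] F) (x : E) :
    T ((LinearMap.ker (T : E →ₗ[𝕜] F))ᗮ.orthogonalProjectionOnto x) = T x := by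
  set K := LinearMap.ker (T : E →ₗ[𝕜] F)
  have : CompleteSpace K := T.isClosed_ker.completeSpace_coe
  have hker : T (K.starProjection x) = 0 := K.starProjection_apply_mem x
  calc T (Kᗮ.orthogonalProjectionOnto x) = T (Kᗮ.starProjection x) := rfl
    _ = T x := by rw [Submodule.starProjection_orthogonal_val, map_sub, hker, sub_zero]

theorem _root_.IsSelfAdjoint.mem_orthogonal_ker_iff {T : E →L[𝕜] E} (hT : IsSelfAdjoint T)
    {x : E} : x ∈ (LinearMap.ker (T : E →ₗ[𝕜] E))ᗮ ↔ x ∈ closure (Set.range T) := by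
  rw [← SetLike.mem_coe, show (LinearMap.ker (T : E →ₗ[𝕜] E))ᗮ = T.kerᗮ from rfl,
    T.orthogonal_ker, hT.adjoint_eq, Submodule.topologicalClosure_coe, LinearMap.coe_range]
  rfl

end InnerProductSpace

namespace IsPositive

variable {E : Type*} [NormedAddCommGroup E] [InnerProductSpace ℂ E] {T : E →L[ℂ] E}

theorem mul_norm_sq_le_re_inner_smul_one_add_apply (hT : T.IsPositive) (l : ℝ) (x : E) :
    l * ‖x‖ ^ 2 ≤ RCLike.re ⟪(l • (1 : E →L[ℂ] E) + T) x, x⟫_ℂ := by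
  have hsmul : RCLike.re ⟪l • x, x⟫_ℂ = l * ‖x‖ ^ 2 := by
    rw [RCLike.real_smul_eq_coe_smul (K := ℂ), inner_smul_left, RCLike.conj_ofReal,
      RCLike.re_ofReal_mul, inner_self_eq_norm_sq]
  rw [add_apply, smul_apply, one_apply_eq_self, inner_add_left, map_add, hsmul]
  exact le_add_of_nonneg_right (hT.re_inner_nonneg_left x)

theorem mul_norm_le_norm_smul_one_add_apply_s7 (hT : T.IsPositive) (l : ℝ) (x : E) :
    l * ‖x‖ ≤ ‖(l • (1 : E →L[ℂ] E) + T) x‖ := by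
  rcases (norm_nonneg x).eq_or_lt' with hx | hx
  · simp [hx]
  refine le_of_mul_le_mul_right ?_ hx
  calc l * ‖x‖ * ‖x‖ = l * ‖x‖ ^ 2 := by ring
    _ ≤ RCLike.re ⟪(l • (1 : E →L[ℂ] E) + T) x, x⟫_ℂ :=
      hT.mul_norm_sq_le_re_inner_smul_one_add_apply l x
    _ ≤ ‖(l • (1 : E →L[ℂ] E) + T) x‖ * ‖x‖ :=
      (RCLike.re_le_norm _).trans (norm_inner_le_norm _ _)

theorem isUnit_smul_one_add [CompleteSpace E] (hT : T.IsPositive) {l : ℝ} (hl : 0 < l) :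
    IsUnit (l • (1 : E →L[ℂ] E) + T) :=
  isUnit_of_forall_le_norm_inner_map _ (c := ⟨l, hl.le⟩) hl fun x =>
    calc ‖x‖ ^ 2 * l = l * ‖x‖ ^ 2 := mul_comm _ _
      _ ≤ _ := hT.mul_norm_sq_le_re_inner_smul_one_add_apply l x
      _ ≤ _ := RCLike.re_le_norm _

end IsPositive

end ContinuousLinearMap

section resolventOp

variable {T : H →L[ℂ] H}

theorem resolventOp_mul_smul_one_add (hT : T.IsPositive) {l : ℝ} (hl : 0 < l) :
    resolventOp T l * (l • (1 : H →L[ℂ] H) + T) = 1 :=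
  Ring.inverse_mul_cancel _ (hT.isUnit_smul_one_add hl)

theorem smul_one_add_mul_resolventOp (hT : T.IsPositive) {l : ℝ} (hl : 0 < l) :
    (l • (1 : H →L[ℂ] H) + T) * resolventOp T l = 1 :=
  Ring.mul_inverse_cancel _ (hT.isUnit_smul_one_add hl)

theorem resolventOp_apply_apply (hT : T.IsPositive) {l : ℝ} (hl : 0 < l) (x : H) :
    resolventOp T l (T x) = x - l • resolventOp T l x := by
  have h := congr($(resolventOp_mul_smul_one_add hT hl) x)
  simp only [mul_apply_eq_comp, add_apply,
    smul_apply, one_apply_eq_self, map_add,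
    ContinuousLinearMap.map_smul_of_tower] at h
  exact eq_sub_of_add_eq' h

theorem norm_smul_resolventOp_le_one (hT : T.IsPositive) {l : ℝ} (hl : 0 < l) :
    ‖l • resolventOp T l‖ ≤ 1 := by
  refine ContinuousLinearMap.opNorm_le_bound _ zero_le_one fun y => ?_
  have h := hT.mul_norm_le_norm_smul_one_add_apply_s7 l (resolventOp T l y)
  rw [← mul_apply_eq_comp, smul_one_add_mul_resolventOp hT hl,
    one_apply_eq_self] at h
  rwa [smul_apply, norm_smul, Real.norm_of_nonneg hl.le, one_mul]

theorem tendsto_smul_resolventOp_apply_zero (hT : T.IsPositive) {x : H}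
    (hx : x ∈ closure (Set.range T)) :
    Tendsto (fun l : ℝ => l • resolventOp T l x) (𝓝[>] 0) (𝓝 0) := by
  have hbound : ∀ᶠ l in 𝓝[>] (0 : ℝ), ‖l • resolventOp T l‖ ≤ 1 :=
    eventually_nhdsWithin_of_forall fun l hl => norm_smul_resolventOp_le_one hT hl
  refine closure_minimal ?_ (ContinuousLinearMap.isClosed_setOf_tendsto_apply_zero hbound) hx
  rintro _ ⟨u, rfl⟩
  have hbdd : ∀ᶠ l in 𝓝[>] (0 : ℝ), ‖u - l • resolventOp T l u‖ ≤ ‖u‖ + ‖u‖ :=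
    eventually_nhdsWithin_of_forall fun l hl => norm_sub_le_of_le le_rfl <|
      ((l • resolventOp T l).le_of_opNorm_le (norm_smul_resolventOp_le_one hT hl) u).trans_eq
        (one_mul _)
  have h := (tendsto_nhdsWithin_of_tendsto_nhds tendsto_id).zero_smul_isBoundedUnder_le
    (isBoundedUnder_of_eventually_le hbdd)
  refine h.congr' (eventually_nhdsWithin_of_forall fun l hl => ?_)
  dsimp only [id]
  rw [smul_apply, resolventOp_apply_apply hT hl]

theorem tendsto_resolventOp_apply_apply (hT : T.IsPositive) {x : H}
    (hx : x ∈ closure (Set.range T)) :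
    Tendsto (fun l : ℝ => resolventOp T l (T x)) (𝓝[>] 0) (𝓝 x) := by
  have h := tendsto_const_nhds (x := x) |>.sub (tendsto_smul_resolventOp_apply_zero hT hx)
  rw [sub_zero] at h
  exact h.congr' <| eventually_nhdsWithin_of_forall fun l hl =>
    (resolventOp_apply_apply hT hl x).symm

end resolventOp

theorem tendsto_resolvent_apply_orthogonalProjection_general (T : H →L[ℂ] H)
    (hpos : 0 ≤ T) (g : H) :
    Filter.Tendsto (fun l : ℝ => resolventOp T l (T g)) (nhdsWithin 0 (Set.Ioi 0))
      (nhds (Submodule.orthogonalProjectionOnto (LinearMap.ker (T : H →ₗ[ℂ] H))ᗮ g : H)) := by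
  have hT : T.IsPositive := T.nonneg_iff_isPositive.mp hpos
  set x : H := (LinearMap.ker (T : H →ₗ[ℂ] H))ᗮ.orthogonalProjectionOnto g
  have hx : x ∈ closure (Set.range T) :=
    hT.isSelfAdjoint.mem_orthogonal_ker_iff.mp (Submodule.coe_mem _)
  rw [← T.apply_orthogonalProjectionOnto_orthogonal_ker g]
  exact tendsto_resolventOp_apply_apply hT hx

/-- Yosida's potential operator theorem: `R_λ (T g)` converges as `λ → 0⁺` to the
orthogonal projection of `g` onto the orthogonal complement of the kernel of `T`. -/
theorem tendsto_resolvent_apply_orthogonalProjection (T : H →L[ℂ] H)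
    (hT : IsSelfAdjoint T) (hpos : 0 ≤ T) (g : H) :
    Filter.Tendsto (fun l : ℝ => resolventOp T l (T g)) (nhdsWithin 0 (Set.Ioi 0))
      (nhds (Submodule.orthogonalProjectionOnto (LinearMap.ker (T : H →ₗ[ℂ] H))ᗮ g : H)) :=
  tendsto_resolvent_apply_orthogonalProjection_general T hpos g
end

section
/- Let H be a complex Hilbert space and T : H →L[ℂ] H a bounded self-adjoint operator with 0 ≤ T, and for λ > 0 let R_λ = (λ•1 + T)⁻¹. Then for every f ∈ H the function λ ↦ ‖√T (R_λ f)‖ is antitone on (0, ∞): if 0 < μ ≤ λ then ‖√T (R_λ f)‖ ≤ ‖√T (R_μ f)‖. -/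
open scoped InnerProductSpace

variable {H : Type*} [NormedAddCommGroup H] [InnerProductSpace ℂ H] [CompleteSpace H]

/-!
By the functional calculus, `√T R_λ = φ_λ(T)` with `φ_λ(t) = √t / (λ + t)`, and for `μ ≤ λ`
one has `φ_λ = ψ · φ_μ` with `ψ(t) = (μ + t) / (λ + t) ∈ [0, 1]` on the spectrum `[0, ∞)`.
Hence `√T R_λ f = ψ(T) (√T R_μ f)` where `ψ(T)` is a contraction.
-/

section CStarAlgebra

variable {A : Type*} [CStarAlgebra A] [PartialOrder A] [StarOrderedRing A] {a : A} {l m : ℝ}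

lemma add_ne_zero_of_mem_spectrum (ha : 0 ≤ a) (hl : 0 < l) : ∀ t ∈ spectrum ℝ a, l + t ≠ 0 :=
  fun _ ht => (add_pos_of_pos_of_nonneg hl (spectrum_nonneg_of_nonneg ha ht)).ne'

lemma continuousOn_inv_add_spectrum (ha : 0 ≤ a) (hl : 0 < l) :
    ContinuousOn (fun t : ℝ => (l + t)⁻¹) (spectrum ℝ a) :=
  (continuousOn_const.add continuousOn_id).inv₀ (add_ne_zero_of_mem_spectrum ha hl)

lemma ring_inverse_smul_one_add_eq_cfc (ha : 0 ≤ a) (hl : 0 < l) :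
    Ring.inverse (l • (1 : A) + a) = cfc (fun t : ℝ => (l + t)⁻¹) a := by
  have hne := add_ne_zero_of_mem_spectrum ha hl
  rw [cfc_inv (fun t : ℝ => l + t) a hne, cfc_add .., cfc_const l a, cfc_id' ℝ a,
    Algebra.algebraMap_eq_smul_one]

lemma sqrt_mul_ring_inverse_smul_one_add_eq_cfc (ha : 0 ≤ a) (hl : 0 < l) :
    CFC.sqrt a * Ring.inverse (l • (1 : A) + a) = cfc (fun t : ℝ => √t * (l + t)⁻¹) a := by
  rw [ring_inverse_smul_one_add_eq_cfc ha hl, CFC.sqrt_eq_real_sqrt a, cfcₙ_eq_cfc,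
    ← cfc_mul _ _ a (by fun_prop) (continuousOn_inv_add_spectrum ha hl)]

lemma norm_cfc_add_mul_inv_add_le_one (ha : 0 ≤ a) (hm : 0 < m) (hml : m ≤ l) :
    ‖cfc (fun t : ℝ => (m + t) * (l + t)⁻¹) a‖ ≤ 1 := by
  refine norm_cfc_le zero_le_one fun t ht => ?_
  have ht0 := spectrum_nonneg_of_nonneg ha ht
  have hlt : 0 < l + t := by linarith
  rw [Real.norm_of_nonneg (by positivity), ← div_eq_mul_inv, div_le_one hlt]
  linarith

lemma sqrt_mul_ring_inverse_smul_one_add_eq_cfc_mul (ha : 0 ≤ a) (hm : 0 < m) (hml : m ≤ l) :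
    CFC.sqrt a * Ring.inverse (l • (1 : A) + a) =
      cfc (fun t : ℝ => (m + t) * (l + t)⁻¹) a * (CFC.sqrt a * Ring.inverse (m • (1 : A) + a)) := by
  have hl := hm.trans_le hml
  rw [sqrt_mul_ring_inverse_smul_one_add_eq_cfc ha hl,
    sqrt_mul_ring_inverse_smul_one_add_eq_cfc ha hm,
    ← cfc_mul (fun t : ℝ => (m + t) * (l + t)⁻¹) (fun t : ℝ => √t * (m + t)⁻¹) a
      ((continuousOn_const.add continuousOn_id).mul (continuousOn_inv_add_spectrum ha hl))
      (Real.continuous_sqrt.continuousOn.mul (continuousOn_inv_add_spectrum ha hm))]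
  refine cfc_congr fun t ht => ?_
  have ht0 := spectrum_nonneg_of_nonneg ha ht
  field_simp

end CStarAlgebra

theorem norm_sqrt_resolvent_antitone_general (T : H →L[ℂ] H)
    (hpos : 0 ≤ T) (f : H) {l m : ℝ} (hm : 0 < m) (hml : m ≤ l) :
    ‖CFC.sqrt T (resolventOp T l f)‖ ≤ ‖CFC.sqrt T (resolventOp T m f)‖ := by
  set C := cfc (fun t : ℝ => (m + t) * (l + t)⁻¹) T
  calc ‖CFC.sqrt T (resolventOp T l f)‖
      = ‖C (CFC.sqrt T (resolventOp T m f))‖ :=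
        congr(‖$(sqrt_mul_ring_inverse_smul_one_add_eq_cfc_mul hpos hm hml) f‖)
    _ ≤ ‖C‖ * ‖CFC.sqrt T (resolventOp T m f)‖ := C.le_opNorm _
    _ ≤ ‖CFC.sqrt T (resolventOp T m f)‖ :=
        mul_le_of_le_one_left (norm_nonneg _) (norm_cfc_add_mul_inv_add_le_one hpos hm hml)

/-- Antitonicity of `λ ↦ ‖√T (R_λ f)‖` on `(0, ∞)`. -/
theorem norm_sqrt_resolvent_antitone (T : H →L[ℂ] H) (hT : IsSelfAdjoint T)
    (hpos : 0 ≤ T) (f : H) {l m : ℝ} (hm : 0 < m) (hml : m ≤ l) :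
    ‖CFC.sqrt T (resolventOp T l f)‖ ≤ ‖CFC.sqrt T (resolventOp T m f)‖ :=
  norm_sqrt_resolvent_antitone_general T hpos f hm hml
end

section
/- Let H be a complex Hilbert space and T : H →L[ℂ] H a bounded self-adjoint operator with 0 ≤ T, and for λ > 0 let R_λ = (λ•1 + T)⁻¹. Then for every g ∈ H and f = √T g, the quantity ‖√T (R_λ f)‖ converges, as λ → 0⁺, to ‖P g‖, where P is the orthogonal projection onto the orthogonal complement of the kernel of T; in particular if g is orthogonal to the kernel of T, then ‖√T (R_λ f)‖² increases to ‖g‖² as λ decreases to 0. -/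
open scoped InnerProductSpace

variable {H : Type*} [NormedAddCommGroup H] [InnerProductSpace ℂ H] [CompleteSpace H]

/-!
Since `√T` commutes with `R_λ = (λ + T)⁻¹`, we have `√T R_λ √T = T R_λ = 1 - λ R_λ`, so everything
reduces to the strong limit of `λ R_λ`. These operators have norm at most `1` and fix `ker T`,
while on the range `λ R_λ (T u) = λ (u - λ R_λ u) = O(λ)`; by density `λ R_λ h → 0` for
`h ∈ closure (range T) = (ker T)ᗮ`, hence `T R_λ g → P g`.
Monotonicity in `λ` comes from the factorisation `T R_λ = ((μ + T) R_λ) (T R_μ)`, where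
`‖(μ + T) w‖ ≤ ‖(λ + T) w‖` for `0 ≤ μ ≤ λ` because
`‖(c + T) w‖² = c² ‖w‖² + 2c re⟪T w, w⟫ + ‖T w‖²` increases with `c ≥ 0`.
-/

open Filter Topology
open scoped Ring

theorem Commute.ringInverse_right {M₀ : Type*} [MonoidWithZero M₀] {a b : M₀}
    (h : Commute a b) : Commute a b⁻¹ʳ := by
  by_cases hb : IsUnit b
  · obtain ⟨u, rfl⟩ := hb
    rw [Ring.inverse_unit]
    exact h.units_inv_right
  · rw [Ring.inverse_non_unit b hb]
    exact Commute.zero_right a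

section Ring

variable {A : Type*} [Ring A] [Algebra ℝ A] {a : A} {l m : ℝ}

theorem Commute.ringInverse_smul_one_add {b : A} (h : Commute b a) :
    Commute b (l • 1 + a)⁻¹ʳ :=
  (((Commute.one_right b).smul_right l).add_right h).ringInverse_right

theorem mul_ringInverse_smul_one_add (hu : IsUnit (l • 1 + a)) :
    a * (l • 1 + a)⁻¹ʳ = 1 - l • (l • 1 + a)⁻¹ʳ := by
  rw [eq_sub_iff_add_eq, ← smul_one_mul l (l • 1 + a)⁻¹ʳ, ← add_mul, add_comm,
    Ring.mul_inverse_cancel _ hu]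

theorem mul_ringInverse_mul_of_mul_self_eq {s : A} (hs : s * s = a) :
    s * (l • 1 + a)⁻¹ʳ * s = a * (l • 1 + a)⁻¹ʳ := by
  have hsR : Commute s (l • 1 + a)⁻¹ʳ :=
    Commute.ringInverse_smul_one_add (hs ▸ (Commute.refl s).mul_right (Commute.refl s))
  rw [hsR.eq, mul_assoc, hs, ((Commute.refl a).ringInverse_smul_one_add).eq]

theorem mul_ringInverse_eq_mul_mul_ringInverse (hm : IsUnit (m • 1 + a)) :
    a * (l • 1 + a)⁻¹ʳ = (m • 1 + a) * (l • 1 + a)⁻¹ʳ * (a * (m • 1 + a)⁻¹ʳ) := by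
  have haR : Commute a (l • 1 + a)⁻¹ʳ := (Commute.refl a).ringInverse_smul_one_add
  have hAa : Commute (m • 1 + a) a := ((Commute.one_left a).smul_left m).add_left (Commute.refl a)
  have hAR : Commute (m • 1 + a) (l • 1 + a)⁻¹ʳ := hAa.ringInverse_smul_one_add
  calc a * (l • 1 + a)⁻¹ʳ = a * (l • 1 + a)⁻¹ʳ * ((m • 1 + a) * (m • 1 + a)⁻¹ʳ) := by
        rw [Ring.mul_inverse_cancel _ hm, mul_one]
    _ = _ := by
        simp only [← mul_assoc]
        rw [haR.eq, mul_assoc (l • 1 + a)⁻¹ʳ a, ← hAa.eq, ← mul_assoc, ← hAR.eq]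

end Ring

namespace ContinuousLinearMap

theorem tendsto_apply_zero_of_mem_closure {𝕜 E F ι : Type*}
    [NontriviallyNormedField 𝕜] [SeminormedAddCommGroup E] [NormedSpace 𝕜 E]
    [SeminormedAddCommGroup F] [NormedSpace 𝕜 F] {L : Filter ι} {A : ι → E →L[𝕜] F} {C : ℝ}
    (hC : ∀ᶠ i in L, ‖A i‖ ≤ C) {s : Set E} (hs : ∀ y ∈ s, Tendsto (fun i ↦ A i y) L (𝓝 0))
    {x : E} (hx : x ∈ closure s) : Tendsto (fun i ↦ A i x) L (𝓝 0) := by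
  rw [Metric.tendsto_nhds]
  intro ε hε
  obtain ⟨y, hys, hxy⟩ := Metric.mem_closure_iff.mp hx (ε / 2 / (|C| + 1)) (by positivity)
  filter_upwards [hC, Metric.tendsto_nhds.mp (hs y hys) (ε / 2) (by positivity)] with i hAi hAiy
  rw [dist_zero_right] at hAiy ⊢
  rw [dist_eq_norm] at hxy
  have hCxy : |C| * ‖x - y‖ ≤ ε / 2 := by
    rw [lt_div_iff₀ (by positivity)] at hxy
    nlinarith [norm_nonneg (x - y)]
  calc ‖A i x‖ ≤ ‖A i (x - y)‖ + ‖A i y‖ := by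
        rw [map_sub]; exact norm_le_norm_sub_add _ _
    _ ≤ |C| * ‖x - y‖ + ‖A i y‖ := by
        gcongr
        exact (A i).le_of_opNorm_le (hAi.trans (le_abs_self C)) _
    _ < ε := by linarith

section InnerProductSpace

variable {E : Type*} [NormedAddCommGroup E] [InnerProductSpace ℂ E] {T : E →L[ℂ] E}

theorem norm_smul_one_add_apply_sq (c : ℝ) (w : E) :
    ‖(c • 1 + T) w‖ ^ 2 = c ^ 2 * ‖w‖ ^ 2 + 2 * c * RCLike.re ⟪T w, w⟫_ℂ + ‖T w‖ ^ 2 := by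
  have hre : RCLike.re ⟪c • w, T w⟫_ℂ = c * RCLike.re ⟪T w, w⟫_ℂ := by
    rw [RCLike.real_smul_eq_coe_smul (K := ℂ), inner_smul_real_left, RCLike.smul_re, inner_re_symm]
  rw [add_apply, smul_apply, one_apply_eq_self, norm_add_sq (𝕜 := ℂ), hre, norm_smul,
    Real.norm_eq_abs, mul_pow, sq_abs]
  ring

theorem IsPositive.mul_norm_le_norm_smul_one_add_apply_s12 (hT : T.IsPositive) {c : ℝ} (hc : 0 ≤ c)
    (w : E) : c * ‖w‖ ≤ ‖(c • 1 + T) w‖ := by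
  refine le_of_sq_le_sq ?_ (norm_nonneg _)
  rw [norm_smul_one_add_apply_sq]
  nlinarith [mul_nonneg hc (hT.re_inner_nonneg_left w)]

theorem IsPositive.norm_smul_one_add_apply_le (hT : T.IsPositive) {m l : ℝ} (hm : 0 ≤ m)
    (hml : m ≤ l) (w : E) : ‖(m • 1 + T) w‖ ≤ ‖(l • 1 + T) w‖ := by
  refine le_of_sq_le_sq ?_ (norm_nonneg _)
  rw [norm_smul_one_add_apply_sq, norm_smul_one_add_apply_sq]
  have hre := hT.re_inner_nonneg_left w
  gcongr

end InnerProductSpace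

section HilbertSpace

variable {E : Type*} [NormedAddCommGroup E] [InnerProductSpace ℂ E] [CompleteSpace E]
  {T : E →L[ℂ] E} {l m : ℝ}

theorem isUnit_smul_one_add_of_nonneg (hT : 0 ≤ T) (hl : 0 < l) : IsUnit (l • 1 + T) :=
  ((isStrictlyPositive_one.smul hl).add_nonneg hT).isUnit

theorem norm_smul_ringInverse_apply_le (hT : 0 ≤ T) (hl : 0 < l) (y : E) :
    ‖l • (l • 1 + T)⁻¹ʳ y‖ ≤ ‖y‖ := by
  have h := ((nonneg_iff_isPositive T).mp hT).mul_norm_le_norm_smul_one_add_apply_s12 hl.le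
    ((l • 1 + T)⁻¹ʳ y)
  rw [norm_smul, Real.norm_of_nonneg hl.le]
  rwa [← mul_apply_eq_comp, Ring.mul_inverse_cancel _ (isUnit_smul_one_add_of_nonneg hT hl),
    one_apply_eq_self] at h

theorem norm_mul_ringInverse_apply_le (hT : 0 ≤ T) (hm : 0 < m) (hml : m ≤ l) (x : E) :
    ‖(T * (l • 1 + T)⁻¹ʳ) x‖ ≤ ‖(T * (m • 1 + T)⁻¹ʳ) x‖ := by
  set y := (T * (m • 1 + T)⁻¹ʳ) x
  calc ‖(T * (l • 1 + T)⁻¹ʳ) x‖ = ‖(m • 1 + T) ((l • 1 + T)⁻¹ʳ y)‖ := by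
        rw [mul_ringInverse_eq_mul_mul_ringInverse (isUnit_smul_one_add_of_nonneg hT hm),
          mul_apply_eq_comp, mul_apply_eq_comp]
    _ ≤ ‖(l • 1 + T) ((l • 1 + T)⁻¹ʳ y)‖ :=
        ((nonneg_iff_isPositive T).mp hT).norm_smul_one_add_apply_le hm.le hml _
    _ = ‖y‖ := by
        rw [← mul_apply_eq_comp,
          Ring.mul_inverse_cancel _ (isUnit_smul_one_add_of_nonneg hT (hm.trans_le hml)),
          one_apply_eq_self]

theorem smul_ringInverse_apply_of_apply_eq_zero (hT : 0 ≤ T) (hl : 0 < l) {k : E}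
    (hk : T k = 0) : l • (l • 1 + T)⁻¹ʳ k = k := by
  have hAk : (l • 1 + T) k = l • k := by
    rw [add_apply, hk, add_zero, smul_apply, one_apply_eq_self]
  rw [← map_smul_of_tower, ← hAk, ← mul_apply_eq_comp,
    Ring.inverse_mul_cancel _ (isUnit_smul_one_add_of_nonneg hT hl), one_apply_eq_self]

theorem tendsto_smul_ringInverse_apply_zero (hT : 0 ≤ T) {x : E}
    (hx : x ∈ closure (Set.range T)) :
    Tendsto (fun l : ℝ ↦ l • (l • 1 + T)⁻¹ʳ x) (𝓝[>] 0) (𝓝 0) := by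
  have hbound : ∀ᶠ l : ℝ in 𝓝[>] 0, ‖l • (l • 1 + T)⁻¹ʳ‖ ≤ 1 := by
    filter_upwards [self_mem_nhdsWithin] with l hl
    exact opNorm_le_bound _ zero_le_one fun y ↦ by
      simpa using norm_smul_ringInverse_apply_le hT hl y
  refine tendsto_apply_zero_of_mem_closure hbound ?_ hx
  rintro _ ⟨u, rfl⟩
  refine squeeze_zero_norm' (a := fun l ↦ l * (2 * ‖u‖)) ?_ ?_
  · filter_upwards [self_mem_nhdsWithin] with l (hl : 0 < l)
    have hTR : Commute T (l • 1 + T)⁻¹ʳ := (Commute.refl T).ringInverse_smul_one_add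
    rw [smul_apply, ← mul_apply_eq_comp, ← hTR.eq,
      mul_ringInverse_smul_one_add (isUnit_smul_one_add_of_nonneg hT hl), sub_apply,
      one_apply_eq_self, norm_smul, Real.norm_of_nonneg hl.le, two_mul]
    gcongr
    calc ‖u - l • (l • 1 + T)⁻¹ʳ u‖ ≤ ‖u‖ + ‖l • (l • 1 + T)⁻¹ʳ u‖ := norm_sub_le _ _
      _ ≤ ‖u‖ + ‖u‖ := by grw [norm_smul_ringInverse_apply_le hT hl u]
  · exact tendsto_nhdsWithin_of_tendsto_nhds
      (((continuous_id.mul continuous_const).tendsto' 0 0) (zero_mul _))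

theorem tendsto_mul_ringInverse_apply (hT : 0 ≤ T) (g : E) :
    Tendsto (fun l : ℝ ↦ (T * (l • 1 + T)⁻¹ʳ) g) (𝓝[>] 0)
      (𝓝 ((LinearMap.ker (T : E →ₗ[ℂ] E))ᗮ.starProjection g)) := by
  set h := (LinearMap.ker (T : E →ₗ[ℂ] E))ᗮ.starProjection g
  have hker : T (g - h) = 0 := by
    have := Submodule.sub_starProjection_mem_orthogonal (K := (LinearMap.ker (T : E →ₗ[ℂ] E))ᗮ) g
    rwa [Submodule.orthogonal_orthogonal_eq_closure,
      (isClosed_ker T).submodule_topologicalClosure_eq] at this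
  have hrange : h ∈ closure (Set.range T) := by
    have hmem : h ∈ (LinearMap.ker (T : E →ₗ[ℂ] E))ᗮ := Submodule.starProjection_apply_mem _ g
    rwa [orthogonal_ker, hT.isSelfAdjoint.adjoint_eq, ← SetLike.mem_coe,
      Submodule.topologicalClosure_coe, LinearMap.coe_range] at hmem
  have hlim := (tendsto_const_nhds (x := h)).sub (tendsto_smul_ringInverse_apply_zero hT hrange)
  rw [sub_zero] at hlim
  refine hlim.congr' ?_
  filter_upwards [self_mem_nhdsWithin] with l (hl : 0 < l)
  rw [mul_ringInverse_smul_one_add (isUnit_smul_one_add_of_nonneg hT hl), sub_apply,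
    one_apply_eq_self, smul_apply, ← sub_add_cancel g h, map_add, smul_add,
    smul_ringInverse_apply_of_apply_eq_zero hT hl hker]
  abel

end HilbertSpace

end ContinuousLinearMap

theorem tendsto_norm_sqrt_resolvent_general (T : H →L[ℂ] H)
    (hpos : 0 ≤ T) (g : H) :
    Filter.Tendsto (fun l : ℝ => ‖CFC.sqrt T (resolventOp T l (CFC.sqrt T g))‖)
        (nhdsWithin 0 (Set.Ioi 0))
        (nhds ‖(Submodule.orthogonalProjection (LinearMap.ker (T : H →ₗ[ℂ] H))ᗮ g : H)‖) ∧
      (g ∈ (LinearMap.ker (T : H →ₗ[ℂ] H))ᗮ →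
        Filter.Tendsto (fun l : ℝ => ‖CFC.sqrt T (resolventOp T l (CFC.sqrt T g))‖ ^ 2)
            (nhdsWithin 0 (Set.Ioi 0)) (nhds (‖g‖ ^ 2)) ∧
          ∀ l m : ℝ, 0 < m → m ≤ l →
            ‖CFC.sqrt T (resolventOp T l (CFC.sqrt T g))‖ ^ 2
              ≤ ‖CFC.sqrt T (resolventOp T m (CFC.sqrt T g))‖ ^ 2) := by
  have hsqrt (l : ℝ) :
      CFC.sqrt T ((l • 1 + T)⁻¹ʳ (CFC.sqrt T g)) = (T * (l • 1 + T)⁻¹ʳ) g := by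
    rw [← mul_apply_eq_comp, ← mul_apply_eq_comp,
      mul_ringInverse_mul_of_mul_self_eq (CFC.sqrt_mul_sqrt_self T hpos)]
  simp only [resolventOp]
  simp only [hsqrt, ← Submodule.starProjection_apply]
  have hlim := ContinuousLinearMap.tendsto_mul_ringInverse_apply hpos g
  refine ⟨hlim.norm, fun hg ↦ ⟨?_, fun l m hm hml ↦ ?_⟩⟩
  · rw [Submodule.starProjection_eq_self_iff.mpr hg] at hlim
    exact hlim.norm.pow 2
  · exact pow_le_pow_left₀ (norm_nonneg _)
      (ContinuousLinearMap.norm_mul_ringInverse_apply_le hpos hm hml g) 2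

/-- For `f = √T g`, `‖√T (R_λ f)‖ → ‖P g‖` as `λ → 0⁺`, where `P` is the orthogonal
projection onto `(ker T)ᗮ`; in particular if `g ⟂ ker T` then `‖√T (R_λ f)‖²`
increases to `‖g‖²` as `λ` decreases to `0`. -/
theorem tendsto_norm_sqrt_resolvent (T : H →L[ℂ] H) (hT : IsSelfAdjoint T)
    (hpos : 0 ≤ T) (g : H) :
    Filter.Tendsto (fun l : ℝ => ‖CFC.sqrt T (resolventOp T l (CFC.sqrt T g))‖)
        (nhdsWithin 0 (Set.Ioi 0))
        (nhds ‖(Submodule.orthogonalProjection (LinearMap.ker (T : H →ₗ[ℂ] H))ᗮ g : H)‖) ∧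
      (g ∈ (LinearMap.ker (T : H →ₗ[ℂ] H))ᗮ →
        Filter.Tendsto (fun l : ℝ => ‖CFC.sqrt T (resolventOp T l (CFC.sqrt T g))‖ ^ 2)
            (nhdsWithin 0 (Set.Ioi 0)) (nhds (‖g‖ ^ 2)) ∧
          ∀ l m : ℝ, 0 < m → m ≤ l →
            ‖CFC.sqrt T (resolventOp T l (CFC.sqrt T g))‖ ^ 2
              ≤ ‖CFC.sqrt T (resolventOp T m (CFC.sqrt T g))‖ ^ 2) :=
  tendsto_norm_sqrt_resolvent_general T hpos g
end
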